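/- Let t be a positive integer. The set of hyperbinary expansions of 2^{t+1} is exactly {1^{t−k}20^k : 0 ≤ k ≤ t} ∪ {10^{t+1}} (so b(2^{t+1}) = t + 2), and the single-step reductions among these expansions are exactly the consecutive pairs in the sequence 1^t2, 1^{t−1}20, …, 20^t, 10^{t+1}, of which the first t are of type ↠ and the last one is of type →; that is, A(2^{t+1}) is a directed path graph. -/

import Mathlib

/-- The value of a word over the digits `{0,1,2}`, read as a (hyper)binary expansion:
`wordVal (x₀ … x_k) = Σ x_i · 2^(k-i)`. -/
def wordVal : List ℕ → ℕ
  | [] => 0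
  | d :: w => d * 2 ^ w.length + wordVal w

/-- `Hyp n` is the set of hyperbinary expansions of `n`: words over `{0,1,2}` with
nonzero leading digit whose value is `n` (the empty word is the unique expansion of `0`). -/
def Hyp (n : ℕ) : Set (List ℕ) :=
  {w | (∀ d ∈ w, d ≤ 2) ∧ w.head? ≠ some 0 ∧ wordVal w = n}

/-- Single-step reduction of type `→` : `(x02y, x10y)` or `(2y, 10y)`. -/
def StepArrow (a b : List ℕ) : Prop :=
  (∃ x y : List ℕ, a = x ++ 0 :: 2 :: y ∧ b = x ++ 1 :: 0 :: y) ∨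
    (∃ y : List ℕ, a = 2 :: y ∧ b = 1 :: 0 :: y)

/-- Single-step reduction of type `↠` : `(x12y, x20y)`. -/
def StepDouble (a b : List ℕ) : Prop :=
  ∃ x y : List ℕ, a = x ++ 1 :: 2 :: y ∧ b = x ++ 2 :: 0 :: y

/-- A single-step reduction (of either type). -/
def Step (a b : List ℕ) : Prop := StepArrow a b ∨ StepDouble a b

/-- `bFun n` is the number of hyperbinary expansions of `n`. -/
noncomputable def bFun (n : ℕ) : ℕ := (Hyp n).ncard

/-- The set of arcs of the graph `A(n)`: labeled single-step reductions between
hyperbinary expansions of `n`. -/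
def arcs (n : ℕ) : Set (List ℕ × List ℕ) :=
  {p | p.1 ∈ Hyp n ∧ p.2 ∈ Hyp n ∧ Step p.1 p.2}

/-- `aFun n` is the number of arcs of `A(n)`. -/
noncomputable def aFun (n : ℕ) : ℕ := (arcs n).ncard

/-- The cyclomatic number `v(n) = a(n) - b(n) + 1` of the connected graph `A(n)`. -/
noncomputable def vFun (n : ℕ) : ℕ := aFun n + 1 - bFun n

/-- The `i`-th vertex (for `0 ≤ i ≤ t+1`) of the directed path graph `A(2^(t+1))`:
`1^(t-i) 2 0^i` for `i ≤ t` and `1 0^(t+1)` for `i = t+1`. -/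
def pathWord1 (t i : ℕ) : List ℕ :=
  if i ≤ t then List.replicate (t - i) 1 ++ 2 :: List.replicate i 0
  else 1 :: List.replicate (t + 1) 0

lemma wordVal_cons (d : ℕ) (w : List ℕ) : wordVal (d :: w) = d * 2 ^ w.length + wordVal w := rfl

lemma wordVal_append (a b : List ℕ) :
    wordVal (a ++ b) = wordVal a * 2 ^ b.length + wordVal b := by
  induction a with
  | nil => simp [wordVal]
  | cons d w ih =>
    simp only [List.cons_append, wordVal_cons, ih, List.length_append]
    rw [pow_add]
    ring

lemma wordVal_rep0 (n : ℕ) : wordVal (List.replicate n 0) = 0 := by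
  induction n with
  | zero => rfl
  | succ n ih => rw [List.replicate_succ]; simp [wordVal_cons, ih]

lemma wordVal_rep1 (n : ℕ) : wordVal (List.replicate n 1) + 1 = 2 ^ n := by
  induction n with
  | zero => rfl
  | succ n ih =>
    rw [List.replicate_succ]
    simp only [wordVal_cons, List.length_replicate, one_mul, pow_succ]
    omega

lemma wordVal_le (u : List ℕ) (h : ∀ d ∈ u, d ≤ 2) :
    wordVal u + 2 ≤ 2 ^ (u.length + 1) := by
  induction u with
  | nil => simp [wordVal]
  | cons d w ih =>
    have hd : d ≤ 2 := h d (by simp)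
    have := ih (fun x hx => h x (by simp [hx]))
    simp only [wordVal_cons, List.length_cons]
    have h2 : d * 2 ^ w.length ≤ 2 * 2 ^ w.length := Nat.mul_le_mul_right _ hd
    rw [pow_succ]
    rw [pow_succ] at this ⊢
    nlinarith [Nat.one_le_two_pow (n := w.length)]

lemma wordVal_eq_zero {u : List ℕ} (h : wordVal u = 0) : u = List.replicate u.length 0 := by
  induction u with
  | nil => rfl
  | cons d w ih =>
    simp only [wordVal_cons] at h
    have hp : 0 < 2 ^ w.length := Nat.pow_pos (by norm_num)
    have hd : d = 0 := by nlinarith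
    have hw : wordVal w = 0 := by omega
    rw [List.length_cons, List.replicate_succ, hd, ih hw]
    simp

lemma factor_lemma : ∀ (x : List ℕ) (m : ℕ) {c : ℕ} {y : List ℕ} {i : ℕ}, c ≠ 2 →
    x ++ c :: 2 :: y = List.replicate m 1 ++ 2 :: List.replicate i 0 →
    c = 1 ∧ 1 ≤ m ∧ x = List.replicate (m - 1) 1 ∧ y = List.replicate i 0 := by
  intro x
  induction x with
  | nil =>
    intro m c y i hc h
    cases m with
    | zero => simp at h; omega
    | succ m' =>
      rw [List.replicate_succ] at h
      simp only [List.nil_append, List.cons_append, List.cons.injEq] at h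
      obtain ⟨hc1, h⟩ := h
      cases m' with
      | zero =>
        simp only [List.replicate_zero, List.nil_append, List.cons.injEq] at h
        exact ⟨hc1, le_refl 1, by simp, h.2⟩
      | succ m'' =>
        rw [List.replicate_succ] at h
        simp at h
  | cons d x' ih =>
    intro m c y i hc h
    cases m with
    | zero =>
      simp only [List.replicate_zero, List.nil_append, List.cons_append,
        List.cons.injEq] at h
      obtain ⟨hd, h⟩ := h
      have : (2 : ℕ) ∈ List.replicate i (0 : ℕ) := by
        rw [← h]; simp
      simp [List.mem_replicate] at this
    | succ m' =>
      rw [List.replicate_succ] at h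
      simp only [List.cons_append, List.cons.injEq] at h
      obtain ⟨hd, h⟩ := h
      obtain ⟨hc1, hm', hx', hy⟩ := ih m' hc h
      refine ⟨hc1, by omega, ?_, hy⟩
      subst hd hx'
      rw [show m' + 1 - 1 = (m' - 1) + 1 by omega, List.replicate_succ]

lemma classify : ∀ (s : ℕ) (u : List ℕ), (∀ d ∈ u, d ≤ 2) → u.length ≤ s + 1 →
    wordVal u = 2 ^ (s + 1) →
    ∃ j ≤ s, u = List.replicate j 1 ++ 2 :: List.replicate (s - j) 0 := by
  intro s
  induction s with
  | zero =>
    intro u hd hl hv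
    match u, hl with
    | [], _ => simp [wordVal] at hv
    | [d], _ =>
      simp [wordVal_cons, wordVal] at hv
      exact ⟨0, le_refl 0, by simp [hv]⟩
  | succ s ih =>
    intro u hd hl hv
    match u with
    | [] =>
      simp only [wordVal] at hv
      have := Nat.one_le_two_pow (n := s + 1 + 1)
      omega
    | d :: v =>
      have hdle : d ≤ 2 := hd d (by simp)
      have hvd : ∀ x ∈ v, x ≤ 2 := fun x hx => hd x (by simp [hx])
      have hvle := wordVal_le v hvd
      rw [wordVal_cons] at hv
      have hlv : v.length ≤ s + 1 := by simpa using hl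
      -- show v.length = s + 1
      have hlen : v.length = s + 1 := by
        by_contra hne
        have h1 : v.length ≤ s := by omega
        have h2 : 2 ^ (v.length + 1) ≤ 2 ^ (s + 1) :=
          Nat.pow_le_pow_right (by norm_num) (by omega)
        have h3 : d * 2 ^ v.length ≤ 2 * 2 ^ v.length := Nat.mul_le_mul_right _ hdle
        have h4 : 2 * 2 ^ v.length = 2 ^ (v.length + 1) := by rw [pow_succ]; ring
        have h5 : 2 ^ (s + 1) < 2 ^ (s + 1 + 1) := Nat.pow_lt_pow_right (by norm_num) (by omega)
        have h6 : 2 ^ (v.length + 1) + 2 ^ (v.length + 1) = 2 ^ (v.length + 2) := by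
          rw [pow_succ (n := v.length + 1)]; ring
        have h7 : 2 ^ (v.length + 2) ≤ 2 ^ (s + 2) :=
          Nat.pow_le_pow_right (by norm_num) (by omega)
        have h8 : 2 ^ (s + 2) = 2 ^ (s + 1) + 2 ^ (s + 1) := by rw [pow_succ]; ring
        omega
      rw [hlen] at hv
      have hp : (0:ℕ) < 2 ^ (s + 1) := Nat.pow_pos (by norm_num)
      have hvlt : wordVal v + 2 ≤ 2 ^ (s + 1 + 1) := by rw [← hlen]; exact hvle
      have hss : 2 ^ (s + 1 + 1) = 2 ^ (s + 1) + 2 ^ (s + 1) := by rw [pow_succ]; ring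
      -- cases on d
      interval_cases d
      · omega
      · -- d = 1 : wordVal v = 2 ^ (s+1)
        have hv2 : wordVal v = 2 ^ (s + 1) := by omega
        obtain ⟨j, hj, hveq⟩ := ih v hvd (by omega) hv2
        refine ⟨j + 1, by omega, ?_⟩
        rw [List.replicate_succ, show s + 1 - (j + 1) = s - j by omega]
        simp [hveq]
      · -- d = 2 : wordVal v = 0
        have hv0 : wordVal v = 0 := by omega
        have := wordVal_eq_zero hv0
        rw [hlen] at this
        exact ⟨0, by omega, by simp [this]⟩

lemma pathWord1_le {t i : ℕ} (h : i ≤ t) :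
    pathWord1 t i = List.replicate (t - i) 1 ++ 2 :: List.replicate i 0 := if_pos h

lemma pathWord1_top (t : ℕ) : pathWord1 t (t + 1) = 1 :: List.replicate (t + 1) 0 :=
  if_neg (by omega)

lemma count_pathWord1 {t i : ℕ} (h : i ≤ t + 1) : (pathWord1 t i).count 0 = i := by
  rcases Nat.lt_or_ge i (t + 1) with h'| h'
  · rw [pathWord1_le (by omega)]
    simp [List.count_append, List.count_replicate, List.count_cons]
  · have : i = t + 1 := by omega
    subst this
    rw [pathWord1_top]
    simp [List.count_replicate, List.count_cons]

lemma pathWord1_inj {t i j : ℕ} (hi : i ≤ t + 1) (hj : j ≤ t + 1)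
    (h : pathWord1 t i = pathWord1 t j) : i = j := by
  have := count_pathWord1 hi
  rw [h, count_pathWord1 hj] at this
  omega

lemma pathWord1_mem_Hyp {t i : ℕ} (h : i ≤ t + 1) :
    pathWord1 t i ∈ {w | (∀ d ∈ w, d ≤ 2) ∧ w.head? ≠ some 0 ∧ wordVal w = 2 ^ (t + 1)} := by
  rcases Nat.lt_or_ge i (t + 1) with h' | h'
  · have hit : i ≤ t := by omega
    rw [pathWord1_le hit]
    refine ⟨?_, ?_, ?_⟩
    · intro d hd
      simp [List.mem_replicate] at hd
      rcases hd with ⟨-, rfl⟩ | rfl | ⟨-, rfl⟩ <;> norm_num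
    · rcases Nat.eq_zero_or_pos (t - i) with h0 | h0
      · rw [h0]; simp
      · rw [show t - i = (t - i - 1) + 1 by omega, List.replicate_succ]; simp
    · rw [wordVal_append, wordVal_cons]
      have h1 := wordVal_rep1 (t - i)
      rw [wordVal_rep0]
      simp only [List.length_cons, List.length_replicate]
      have hb : 2 ^ (t - i) * 2 ^ (i + 1) = 2 ^ (t + 1) := by
        rw [← pow_add]; congr 1; omega
      have hpos : 1 ≤ 2 ^ (t - i) := Nat.one_le_two_pow
      have hmul := Nat.mul_le_mul_right (2 ^ (i + 1)) hpos
      have : (2 ^ (t - i) - 1) * 2 ^ (i + 1) + 2 ^ (i + 1) = 2 ^ (t + 1) := by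
        rw [Nat.sub_mul, one_mul]
        omega
      have h2 : wordVal (List.replicate (t - i) 1) = 2 ^ (t - i) - 1 := by omega
      rw [h2]
      rw [pow_succ] at this ⊢
      omega
  · have : i = t + 1 := by omega
    subst this
    rw [pathWord1_top]
    refine ⟨?_, by simp, ?_⟩
    · intro d hd
      simp [List.mem_replicate] at hd
      rcases hd with rfl | ⟨-, rfl⟩ <;> norm_num
    · rw [wordVal_cons, wordVal_rep0]
      simp

lemma no_two_in_top {t : ℕ} {z : List ℕ} (h : 1 :: List.replicate (t + 1) (0:ℕ) = z)
    (h2 : (2:ℕ) ∈ z) : False := by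
  rw [← h] at h2
  simp [List.mem_replicate] at h2

lemma Hyp_eq (t : ℕ) :
    Hyp (2 ^ (t + 1)) = {w | ∃ i ≤ t + 1, w = pathWord1 t i} := by
  ext w
  simp only [Hyp, Set.mem_setOf_eq]
  constructor
  · rintro ⟨hdig, hhead, hval⟩
    match w with
    | [] =>
      simp only [wordVal] at hval
      have := Nat.one_le_two_pow (n := t + 1)
      omega
    | d :: v =>
      have hd0 : d ≠ 0 := by simpa using hhead
      have hdle : d ≤ 2 := hdig d (by simp)
      rw [wordVal_cons] at hval
      have hlb : 2 ^ v.length ≤ 2 ^ (t + 1) := by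
        have : 1 * 2 ^ v.length ≤ d * 2 ^ v.length := Nat.mul_le_mul_right _ (by omega)
        omega
      have hlv : v.length ≤ t + 1 := by
        have := (Nat.pow_le_pow_iff_right (by norm_num : 1 < 2)).mp hlb
        omega
      rcases Nat.eq_or_lt_of_le hlv with heq | hlt
      · -- length v = t + 1, so d = 1, v = 0^(t+1)
        rw [heq] at hval
        have hd1 : d = 1 := by
          have hp : 1 ≤ 2 ^ (t + 1) := Nat.one_le_two_pow
          interval_cases d <;> omega
        have hv0 : wordVal v = 0 := by
          rw [hd1, one_mul] at hval; omega
        have := wordVal_eq_zero hv0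
        rw [heq] at this
        exact ⟨t + 1, le_refl _, by rw [pathWord1_top, this, hd1]⟩
      · -- length w ≤ t + 1
        obtain ⟨j, hj, hw⟩ := classify t (d :: v) hdig (by simp; omega)
          (by rw [wordVal_cons]; exact hval)
        refine ⟨t - j, by omega, ?_⟩
        rw [pathWord1_le (by omega), show t - (t - j) = j by omega, hw]
  · rintro ⟨i, hi, rfl⟩
    exact pathWord1_mem_Hyp hi

lemma bFun_eq (t : ℕ) : bFun (2 ^ (t + 1)) = t + 2 := by
  have hset : Hyp (2 ^ (t + 1)) = ↑((Finset.range (t + 2)).image (pathWord1 t)) := by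
    rw [Hyp_eq]
    ext w
    simp only [Set.mem_setOf_eq, Finset.coe_image, Finset.coe_range, Set.mem_image,
      Set.mem_Iio]
    constructor
    · rintro ⟨i, hi, rfl⟩; exact ⟨i, by omega, rfl⟩
    · rintro ⟨i, hi, rfl⟩; exact ⟨i, by omega, rfl⟩
  rw [bFun, hset, Set.ncard_coe_finset, Finset.card_image_of_injOn, Finset.card_range]
  intro i hi j hj h
  simp only [Finset.coe_range, Set.mem_Iio] at hi hj
  exact pathWord1_inj (by omega) (by omega) h

lemma step_iffs (t : ℕ) {i j : ℕ} (hi : i ≤ t + 1) (hj : j ≤ t + 1) :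
    (StepDouble (pathWord1 t i) (pathWord1 t j) ↔ j = i + 1 ∧ j ≤ t) ∧
    (StepArrow (pathWord1 t i) (pathWord1 t j) ↔ i = t ∧ j = t + 1) := by
  constructor
  · constructor
    · rintro ⟨x, y, ha, hb⟩
      rcases Nat.lt_or_ge i (t + 1) with hit | hit
      · have hit : i ≤ t := by omega
        rw [pathWord1_le hit] at ha
        obtain ⟨-, hm, hx, hy⟩ := factor_lemma x (t - i) (by norm_num) ha.symm
        have hi1 : i + 1 ≤ t := by omega
        have hpj : pathWord1 t j = pathWord1 t (i + 1) := by
          rw [hb, hx, hy, pathWord1_le hi1,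
            show t - i - 1 = t - (i + 1) by omega, ← List.replicate_succ]
        have := pathWord1_inj hj (by omega) hpj
        exact ⟨this, by omega⟩
      · have : i = t + 1 := by omega
        subst this
        rw [pathWord1_top] at ha
        exact absurd (no_two_in_top ha (by simp)) (by simp)
    · rintro ⟨rfl, hjt⟩
      refine ⟨List.replicate (t - (i + 1)) 1, List.replicate i 0, ?_, ?_⟩
      · rw [pathWord1_le (by omega), show t - i = (t - (i + 1)) + 1 by omega,
          List.replicate_succ']
        simp
      · rw [pathWord1_le hjt, ← List.replicate_succ]
  · constructor
    · rintro (⟨x, y, ha, hb⟩ | ⟨y, ha, hb⟩)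
      · exfalso
        rcases Nat.lt_or_ge i (t + 1) with hit | hit
        · rw [pathWord1_le (by omega)] at ha
          obtain ⟨h01, -, -, -⟩ := factor_lemma x (t - i) (by norm_num) ha.symm
          omega
        · have : i = t + 1 := by omega
          subst this
          rw [pathWord1_top] at ha
          exact no_two_in_top ha (by simp)
      · rcases Nat.lt_or_ge i (t + 1) with hit | hit
        · have hit : i ≤ t := by omega
          rw [pathWord1_le hit] at ha
          rcases Nat.eq_zero_or_pos (t - i) with h0 | h0
          · have hieq : i = t := by omega
            rw [h0] at ha
            simp only [List.replicate_zero, List.nil_append, List.cons.injEq] at ha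
            have hpj : pathWord1 t j = pathWord1 t (t + 1) := by
              rw [hb, ← ha.2, pathWord1_top, hieq, ← List.replicate_succ]
            exact ⟨hieq, pathWord1_inj hj (by omega) hpj⟩
          · exfalso
            rw [show t - i = (t - i - 1) + 1 by omega, List.replicate_succ] at ha
            simp at ha
        · exfalso
          have : i = t + 1 := by omega
          subst this
          rw [pathWord1_top] at ha
          simp at ha
    · rintro ⟨rfl, rfl⟩
      right
      refine ⟨List.replicate i 0, ?_, ?_⟩
      · rw [pathWord1_le le_rfl]; simp
      · rw [pathWord1_top, List.replicate_succ]


/-- For a positive integer `t`, the hyperbinary expansions of `2^(t+1)` are exactly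
`{1^(t-k)20^k : 0 ≤ k ≤ t} ∪ {10^(t+1)}` (so `b(2^(t+1)) = t + 2`), and the
single-step reductions among them are exactly the consecutive pairs in the sequence
`1^t2 ↠ 1^(t-1)20 ↠ ⋯ ↠ 20^t → 10^(t+1)`: the first `t` of type `↠` and the last
of type `→`; that is, `A(2^(t+1))` is a directed path graph. -/
theorem A_pow_two (t : ℕ) (ht : 0 < t) :
    Hyp (2 ^ (t + 1)) = {w | ∃ i ≤ t + 1, w = pathWord1 t i} ∧
    bFun (2 ^ (t + 1)) = t + 2 ∧
    ∀ i, i ≤ t + 1 → ∀ j, j ≤ t + 1 →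
      (StepDouble (pathWord1 t i) (pathWord1 t j) ↔ j = i + 1 ∧ j ≤ t) ∧
      (StepArrow (pathWord1 t i) (pathWord1 t j) ↔ i = t ∧ j = t + 1) :=
  ⟨Hyp_eq t, bFun_eq t, fun _ hi _ hj => step_iffs t hi hj⟩
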